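/- Let n ≥ 2 and m ≥ 1 be integers. The ℂ-linear span of the bracket monomials p_{i₁j₁}⋯p_{i_mj_m} whose valence scheme is a Rumer diagram (i.e., whose edge multiset {(i₁,j₁),…,(i_m,j_m)} has no two crossing edges) equals the ℂ-linear span of all bracket monomials p_{i₁j₁}⋯p_{i_mj_m} with 1 ≤ i_s < j_s ≤ n for s = 1,…,m, inside the polynomial ring ℂ[x₁⁽¹⁾, x₂⁽¹⁾, …, x₁⁽ⁿ⁾, x₂⁽ⁿ⁾]. -/

import Mathlib

/-!
For `i < j < k < l` the Plücker relation `p_{ik} p_{jl} = p_{ij} p_{kl} + p_{il} p_{jk}` rewrites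
a bracket monomial with a crossing pair of edges as the sum of the two monomials in which that
pair is replaced by the disjoint pair and by the nested pair. Each exchange strictly lowers the
weight `∑ (i + n) j` of the valence scheme, so repeating it ends in Rumer diagrams.
-/

open MvPolynomial

/-- Two chords `(i,j)` and `(k,l)` (with `i < j`, `k < l`) of a circle with `n` marked
points cross iff `i < k < j < l` or `k < i < l < j`. -/
def Crosses {n : ℕ} (e f : Fin n × Fin n) : Prop :=
  (e.1 < f.1 ∧ f.1 < e.2 ∧ e.2 < f.2) ∨ (f.1 < e.1 ∧ e.1 < f.2 ∧ f.2 < e.2)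

/-- The bracket `p_{ab} = x₁⁽ᵃ⁾x₂⁽ᵇ⁾ − x₂⁽ᵃ⁾x₁⁽ᵇ⁾` in the polynomial ring
`ℂ[x₁⁽¹⁾, x₂⁽¹⁾, …, x₁⁽ⁿ⁾, x₂⁽ⁿ⁾]`. -/
noncomputable def bracket (n : ℕ) (a b : Fin n) : MvPolynomial (Fin n × Fin 2) ℂ :=
  X (a, 0) * X (b, 1) - X (a, 1) * X (b, 0)

/-- The bracket monomial `p_{i₁j₁}⋯p_{i_mj_m}` whose valence scheme is the multiset `E`
of edges `(i₁,j₁),…,(i_m,j_m)`. -/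
noncomputable def bracketMonomial (n : ℕ) (E : Multiset (Fin n × Fin n)) :
    MvPolynomial (Fin n × Fin 2) ℂ :=
  (E.map fun e => bracket n e.1 e.2).prod

theorem bracket_mul_bracket_eq_add (n : ℕ) (i j k l : Fin n) :
    bracket n i k * bracket n j l
      = bracket n i j * bracket n k l + bracket n i l * bracket n j k := by
  unfold bracket; ring

theorem bracketMonomial_cons (n : ℕ) (e : Fin n × Fin n) (E : Multiset (Fin n × Fin n)) :
    bracketMonomial n (e ::ₘ E) = bracket n e.1 e.2 * bracketMonomial n E := by
  simp only [bracketMonomial, Multiset.map_cons, Multiset.prod_cons]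

theorem bracketMonomial_crossing_eq_add (n : ℕ) (i j k l : Fin n) (E : Multiset (Fin n × Fin n)) :
    bracketMonomial n ((i, k) ::ₘ (j, l) ::ₘ E)
      = bracketMonomial n ((i, j) ::ₘ (k, l) ::ₘ E)
        + bracketMonomial n ((i, l) ::ₘ (j, k) ::ₘ E) := by
  simp only [bracketMonomial_cons, ← mul_assoc]
  rw [bracket_mul_bracket_eq_add, add_mul]

theorem exists_eq_cons_cons_of_crosses {n : ℕ} {E : Multiset (Fin n × Fin n)}
    {e f : Fin n × Fin n} (he : e ∈ E) (hf : f ∈ E) (hef : Crosses e f) :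
    ∃ i j k l T, i < j ∧ j < k ∧ k < l ∧ E = (i, k) ::ₘ (j, l) ::ₘ T := by
  have of_lt : ∀ a ∈ E, ∀ b ∈ E, a.1 < b.1 → b.1 < a.2 → a.2 < b.2 →
      ∃ i j k l T, i < j ∧ j < k ∧ k < l ∧ E = (i, k) ::ₘ (j, l) ::ₘ T := by
    intro a ha b hb h₁ h₂ h₃
    obtain ⟨T', rfl⟩ := Multiset.exists_cons_of_mem ha
    have hb' : b ∈ T' := (Multiset.mem_cons.mp hb).resolve_left (fun h => h₁.ne (h ▸ rfl))
    obtain ⟨T, rfl⟩ := Multiset.exists_cons_of_mem hb'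
    exact ⟨a.1, b.1, a.2, b.2, T, h₁, h₂, h₃, rfl⟩
  rcases hef with ⟨h₁, h₂, h₃⟩ | ⟨h₁, h₂, h₃⟩
  exacts [of_lt e he f hf h₁ h₂ h₃, of_lt f hf e he h₁ h₂ h₃]

/-- Replacing crossing chords `(i,k), (j,l)` by `(i,j), (k,l)` lowers the total weight by
`(k - j)(n + i - l) > 0`, and by `(i,l), (j,k)` lowers it by `(j - i)(l - k) > 0`. -/
def chordWeight {n : ℕ} (e : Fin n × Fin n) : ℕ := (e.1 + n) * e.2

theorem chordWeight_add_lt_of_crossing {n : ℕ} {i j k l : Fin n}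
    (hij : i < j) (hjk : j < k) (hkl : k < l) :
    chordWeight (i, j) + chordWeight (k, l) < chordWeight (i, k) + chordWeight (j, l) ∧
      chordWeight (i, l) + chordWeight (j, k) < chordWeight (i, k) + chordWeight (j, l) := by
  simp only [chordWeight, Fin.lt_def] at *
  have hl := l.isLt
  constructor <;> nlinarith

def schemeWeight {n : ℕ} (E : Multiset (Fin n × Fin n)) : ℕ := (E.map chordWeight).sum

theorem schemeWeight_cons {n : ℕ} (e : Fin n × Fin n) (E : Multiset (Fin n × Fin n)) :
    schemeWeight (e ::ₘ E) = chordWeight e + schemeWeight E := by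
  simp only [schemeWeight, Multiset.map_cons, Multiset.sum_cons]

theorem bracketMonomial_mem_span_rumer {n m : ℕ} (E : Multiset (Fin n × Fin n))
    (hm : Multiset.card E = m) (hE : ∀ e ∈ E, e.1 < e.2) :
    bracketMonomial n E ∈ Submodule.span ℂ
      {g | ∃ E' : Multiset (Fin n × Fin n), Multiset.card E' = m ∧ (∀ e ∈ E', e.1 < e.2) ∧
        (∀ e ∈ E', ∀ f ∈ E', ¬ Crosses e f) ∧ g = bracketMonomial n E'} := by
  induction hw : schemeWeight E using Nat.strong_induction_on generalizing E with
  | _ w ih =>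
  by_cases hR : ∀ e ∈ E, ∀ f ∈ E, ¬ Crosses e f
  · exact Submodule.subset_span ⟨E, hm, hE, hR, rfl⟩
  push Not at hR
  obtain ⟨e, he, f, hf, hef⟩ := hR
  obtain ⟨i, j, k, l, T, hij, hjk, hkl, rfl⟩ := exists_eq_cons_cons_of_crosses he hf hef
  have hT : ∀ e ∈ T, e.1 < e.2 := fun e he => hE e (by simp [he])
  obtain ⟨hw₁, hw₂⟩ := chordWeight_add_lt_of_crossing hij hjk hkl
  simp only [schemeWeight_cons] at hw
  simp only [Multiset.card_cons] at hm
  rw [bracketMonomial_crossing_eq_add]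
  apply Submodule.add_mem
  · refine ih _ ?_ _ (by simpa using hm) ?_ rfl
    · rw [← hw, schemeWeight_cons, schemeWeight_cons]; omega
    · simp only [Multiset.mem_cons, forall_eq_or_imp]
      exact ⟨hij, hkl, hT⟩
  · refine ih _ ?_ _ (by simpa using hm) ?_ rfl
    · rw [← hw, schemeWeight_cons, schemeWeight_cons]; omega
    · simp only [Multiset.mem_cons, forall_eq_or_imp]
      exact ⟨hij.trans (hjk.trans hkl), hjk, hT⟩

theorem span_rumer_bracket_monomials_eq_span_bracket_monomials
    (n m : ℕ) :
    Submodule.span ℂ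
        {g : MvPolynomial (Fin n × Fin 2) ℂ |
          ∃ E : Multiset (Fin n × Fin n), Multiset.card E = m ∧ (∀ e ∈ E, e.1 < e.2) ∧
            (∀ e ∈ E, ∀ f ∈ E, ¬ Crosses e f) ∧ g = bracketMonomial n E}
      = Submodule.span ℂ
          {g : MvPolynomial (Fin n × Fin 2) ℂ |
            ∃ E : Multiset (Fin n × Fin n), Multiset.card E = m ∧ (∀ e ∈ E, e.1 < e.2) ∧
              g = bracketMonomial n E} := by
  apply le_antisymm
  · exact Submodule.span_mono fun g ⟨E, hm, hE, _, hg⟩ => ⟨E, hm, hE, hg⟩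
  · rw [Submodule.span_le]
    rintro g ⟨E, hm, hE, rfl⟩
    exact bracketMonomial_mem_span_rumer E hm hE
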